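/- arXiv:math/0608484 — 4 statements merged into one kernel-verified Lean document; each statement's English description precedes it below -/
import Mathlib

section
/- Let (G, E, ∂, ▷) be a reduced crossed module. Let X, Y ∈ G and e, f, g, h, i, j, k, m, n, p ∈ E satisfy the four relations e·f = (X ▷ g)·h, g·i = (Y ▷ j)·k, f·m = e⁻¹·((X·Y) ▷ j)·e·n, and h·m = (X ▷ i)·p. Then the fifth relation e·n = (X ▷ k)·p holds. (In the description of the most general 𝒢-colouring of the 4-simplex (01234), the relation coming from the face (0124) is a consequence of the relations coming from the other four tetrahedral faces.) -/
/-- In the description of the most general `𝒢`-colouring of the 4-simplex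
`(01234)` for a reduced crossed module `(G, E, δ, ▷)` (boundary map `δ = ∂`),
the relation coming from the face `(0124)` is a consequence of the relations
coming from the other four tetrahedral faces. -/
theorem crossedModule_fourSimplex_fifth_relation {G E : Type*} [Group G] [Group E]
    (δ : E →* G) [MulDistribMulAction G E]
    (CM1 : ∀ (X : G) (e : E), δ (X • e) = X * δ e * X⁻¹)
    (CM2 : ∀ e f : E, (δ e) • f = e * f * e⁻¹)
    (X Y : G) (e f g h i j k m n p : E)
    (h1 : e * f = (X • g) * h)
    (h2 : g * i = (Y • j) * k)
    (h3 : f * m = e⁻¹ * ((X * Y) • j) * e * n)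
    (h4 : h * m = (X • i) * p) :
    e * n = (X • k) * p := by
  have key : e * (f * m) = (X • g) * (h * m) := by
    rw [← mul_assoc, h1, mul_assoc]
  rw [h3, h4] at key
  have lhs : e * (e⁻¹ * ((X * Y) • j) * e * n) = ((X * Y) • j) * (e * n) := by
    group
  have rhs : (X • g) * ((X • i) * p) = ((X * Y) • j) * ((X • k) * p) := by
    rw [← mul_assoc, ← smul_mul', h2, smul_mul', mul_smul, mul_assoc]
  rw [lhs, rhs] at key
  exact mul_left_cancel key
end

section
/- Let α be a type, G a group, E a group equipped with a left action ▷ of G by group automorphisms, and φ : FreeGroup α → G a group homomorphism. Then for every function v : α → E there exists a unique φ-derivation d : FreeGroup α → E such that d(of a) = v(a) for all a ∈ α, where 'of' denotes the canonical inclusion of generators into the free group. In particular, any φ-derivation on a free group is uniquely determined by its values on the free generators, and any assignment of values on the generators extends to a φ-derivation. -/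
/-!
Twisting a `φ`-derivation `d` gives the map `x ↦ (φ x • d x, φ x)` into the semidirect
product `E ⋊ G`, and `d` is a derivation exactly when this map is multiplicative. So
derivations are the homomorphisms into `E ⋊ G` lying over `φ`, and on a free group those are
freely determined by their values on the generators.
-/

open SemidirectProduct

section Derivation

variable {H G E : Type*} [MulOneClass H] [Group G] [Group E] [MulDistribMulAction G E]

def IsDerivation (φ : H →* G) (d : H → E) : Prop :=
  ∀ x y : H, d (x * y) = (φ y)⁻¹ • d x * d y

abbrev derivationGraph (φ : H →* G) (d : H → E) :
    H → E ⋊[MulDistribMulAction.toMulAut G E] G :=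
  fun x => ⟨φ x • d x, φ x⟩

theorem derivationGraph_mul_iff (φ : H →* G) (d : H → E) (x y : H) :
    derivationGraph φ d (x * y) = derivationGraph φ d x * derivationGraph φ d y ↔
      d (x * y) = (φ y)⁻¹ • d x * d y := by
  conv_rhs => rw [← (MulAction.injective (φ (x * y))).eq_iff]
  simp [SemidirectProduct.ext_iff, mul_smul, smul_mul']

theorem derivationGraph_injective (φ : H →* G) :
    Function.Injective (derivationGraph (E := E) φ) := fun _ _ h =>
  funext fun x => (MulAction.injective (φ x)) (congrArg left (congrFun h x))

def IsDerivation.toHom {φ : H →* G} {d : H → E} (hd : IsDerivation φ d) :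
    H →* E ⋊[MulDistribMulAction.toMulAut G E] G :=
  MonoidHom.mk' (derivationGraph φ d) fun x y => (derivationGraph_mul_iff φ d x y).2 (hd x y)

theorem isDerivation_of_derivationGraph_eq {φ : H →* G} {d : H → E}
    {F : H →* E ⋊[MulDistribMulAction.toMulAut G E] G} (h : derivationGraph φ d = F) :
    IsDerivation φ d := fun x y =>
  (derivationGraph_mul_iff φ d x y).1 (by rw [h, map_mul])

theorem derivationGraph_inv_smul_left {φ : H →* G}
    {F : H →* E ⋊[MulDistribMulAction.toMulAut G E] G}
    (hF : rightHom.comp F = φ) :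
    derivationGraph φ (fun x => (φ x)⁻¹ • (F x).left) = F := by
  subst hF
  ext x <;> simp

theorem IsDerivation.freeGroup_ext {α : Type*} {φ : FreeGroup α →* G}
    {d d' : FreeGroup α → E} (hd : IsDerivation φ d) (hd' : IsDerivation φ d')
    (h : ∀ a, d (FreeGroup.of a) = d' (FreeGroup.of a)) : d = d' :=
  derivationGraph_injective φ <| congrArg DFunLike.coe <|
    FreeGroup.ext_hom hd.toHom hd'.toHom fun a => by simp [IsDerivation.toHom, h a]

end Derivation

/-- Let `G` be a group, `E` a group with a left action of `G` by group
automorphisms, and `φ : FreeGroup α →* G` a group homomorphism.  Any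
assignment `v : α → E` of values on the free generators extends uniquely to a
`φ`-derivation `d : FreeGroup α → E` with `d (FreeGroup.of a) = v a`. -/
theorem freeGroup_derivation_exists_unique {α G E : Type*} [Group G] [Group E]
    [MulDistribMulAction G E] (φ : FreeGroup α →* G) (v : α → E) :
    ∃! d : FreeGroup α → E,
      (∀ x y : FreeGroup α, d (x * y) = ((φ y)⁻¹ • d x) * d y) ∧
      (∀ a : α, d (FreeGroup.of a) = v a) := by
  set F : FreeGroup α →* E ⋊[MulDistribMulAction.toMulAut G E] G :=
    FreeGroup.lift fun a => ⟨φ (.of a) • v a, φ (.of a)⟩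
  set d₀ : FreeGroup α → E := fun x => (φ x)⁻¹ • (F x).left
  have hgraph : derivationGraph φ d₀ = F :=
    derivationGraph_inv_smul_left <| FreeGroup.ext_hom _ _ fun a => by simp [F]
  have hd₀ : IsDerivation φ d₀ := isDerivation_of_derivationGraph_eq hgraph
  have hv : ∀ a, d₀ (.of a) = v a := fun a => by simp [d₀, F]
  refine ⟨d₀, ⟨hd₀, hv⟩, fun d ⟨hd, hdv⟩ => ?_⟩
  exact IsDerivation.freeGroup_ext (φ := φ) hd hd₀ fun a => (hdv a).trans (hv a).symm
end

section
/- Let 𝒜 = (A₁, A₂, δ, ▷) be a reduced crossed module with A₁ = FreeGroup S the free group on a type S, let 𝒢 = (G, E, ∂, ▷') be a reduced crossed module, and let f = (f₁, f₂) : 𝒜 → 𝒢 be a morphism of reduced crossed modules. Then the set of f-homotopies, i.e. pairs (X, H₁) where X ∈ G and H₁ : A₁ → E is an f₁-derivation, is in bijection with G × (S → E). In particular, if G and E are finite and S is finite with n₁ elements, there are exactly (#G)·(#E)^{n₁} f-homotopies. -/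
section Aux
variable {S G E : Type*} [Group G] [Group E] [MulDistribMulAction G E]
  (f₁ : FreeGroup S →* G)

local notation "φ" => MulDistribMulAction.toMulAut G E

/-- Pack a derivation into a hom to the semidirect product. -/
def derivToHom (d : FreeGroup S → E)
    (hd : ∀ x y, d (x * y) = ((f₁ y)⁻¹ • d x) * d y) :
    FreeGroup S →* E ⋊[φ] G where
  toFun x := ⟨f₁ x • d x, f₁ x⟩
  map_one' := by
    have h1 : d 1 = 1 := by
      have := hd 1 1
      simp at this
      exact this
    ext <;> simp [h1]
  map_mul' x y := by
    ext
    · show f₁ (x*y) • d (x*y) = (f₁ x • d x) * (φ (f₁ x)) (f₁ y • d y)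
      simp [hd x y, map_mul, mul_smul, smul_mul']
    · simp

/-- The hom induced by a function on generators. -/
noncomputable def genHom (k : S → E) : FreeGroup S →* E ⋊[φ] G :=
  FreeGroup.lift fun s => ⟨f₁ (FreeGroup.of s) • k s, f₁ (FreeGroup.of s)⟩

lemma genHom_right (k : S → E) (x : FreeGroup S) :
    (genHom f₁ k x).right = f₁ x := by
  have : (SemidirectProduct.rightHom.comp (genHom f₁ k)) = f₁ := by
    apply FreeGroup.ext_hom
    intro s
    simp [genHom]
  exact DFunLike.congr_fun this x

lemma genHom_deriv (k : S → E) :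
    ∀ x y : FreeGroup S,
      (fun x => (f₁ x)⁻¹ • (genHom f₁ k x).left) (x * y) =
        ((f₁ y)⁻¹ • (fun x => (f₁ x)⁻¹ • (genHom f₁ k x).left) x) *
          (fun x => (f₁ x)⁻¹ • (genHom f₁ k x).left) y := by
  intro x y
  have hmul : (genHom f₁ k (x * y)).left
      = (genHom f₁ k x).left * f₁ x • (genHom f₁ k y).left := by
    rw [map_mul]
    simp [SemidirectProduct.mul_left, genHom_right]
  simp only []
  rw [hmul, map_mul, mul_inv_rev, smul_mul', mul_smul, mul_smul, inv_smul_smul]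

lemma derivToHom_eq_genHom (d : FreeGroup S → E)
    (hd : ∀ x y, d (x * y) = ((f₁ y)⁻¹ • d x) * d y) :
    genHom f₁ (fun s => d (FreeGroup.of s)) = derivToHom f₁ d hd := by
  apply FreeGroup.ext_hom
  intro s
  simp [genHom, derivToHom]

end Aux

/-- Let `𝒜 = (FreeGroup S, A₂, δA, ▷)` be a reduced crossed module whose base
group is free on `S`, let `𝒢 = (G, E, δG, ▷')` be a reduced crossed module,
and let `f = (f₁, f₂) : 𝒜 → 𝒢` be a morphism of reduced crossed modules.
Then the set of `f`-homotopies, i.e. pairs `(X, H₁)` with `X ∈ G` and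
`H₁ : FreeGroup S → E` an `f₁`-derivation, is in bijection with
`G × (S → E)`.  In particular, if `G`, `E` and `S` are finite (`S` with `n₁`
elements), there are exactly `#G · #E ^ n₁` `f`-homotopies. -/
theorem card_crossedModule_homotopies {S G E A₂ : Type*}
    [Group G] [Group E] [Group A₂] [Fintype G] [Fintype E] [Fintype S]
    [MulDistribMulAction (FreeGroup S) A₂] [MulDistribMulAction G E]
    (δA : A₂ →* FreeGroup S)
    (CM1A : ∀ (a : FreeGroup S) (e : A₂), δA (a • e) = a * δA e * a⁻¹)
    (CM2A : ∀ e f : A₂, (δA e) • f = e * f * e⁻¹)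
    (δG : E →* G)
    (CM1G : ∀ (X : G) (e : E), δG (X • e) = X * δG e * X⁻¹)
    (CM2G : ∀ e f : E, (δG e) • f = e * f * e⁻¹)
    (f₁ : FreeGroup S →* G) (f₂ : A₂ →* E)
    (hcomp : ∀ e : A₂, δG (f₂ e) = f₁ (δA e))
    (hact : ∀ (a : FreeGroup S) (e : A₂), f₂ (a • e) = f₁ a • f₂ e) :
    Nonempty
      ({H : G × (FreeGroup S → E) //
          ∀ x y : FreeGroup S, H.2 (x * y) = ((f₁ y)⁻¹ • H.2 x) * H.2 y} ≃
        G × (S → E)) ∧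
    Nat.card {H : G × (FreeGroup S → E) //
        ∀ x y : FreeGroup S, H.2 (x * y) = ((f₁ y)⁻¹ • H.2 x) * H.2 y} =
      Fintype.card G * Fintype.card E ^ Fintype.card S := by
  have e : {H : G × (FreeGroup S → E) //
      ∀ x y : FreeGroup S, H.2 (x * y) = ((f₁ y)⁻¹ • H.2 x) * H.2 y} ≃
      G × (S → E) := by
    refine
      { toFun := fun H => (H.1.1, fun s => H.1.2 (FreeGroup.of s))
        invFun := fun p =>
          ⟨(p.1, fun x => (f₁ x)⁻¹ • (genHom f₁ p.2 x).left),
            genHom_deriv f₁ p.2⟩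
        left_inv := ?_
        right_inv := ?_ }
    · rintro ⟨⟨X, d⟩, hd⟩
      ext x
      · rfl
      · show (f₁ x)⁻¹ • (genHom f₁ (fun s => d (FreeGroup.of s)) x).left = d x
        rw [derivToHom_eq_genHom f₁ d hd]
        show (f₁ x)⁻¹ • (f₁ x • d x) = d x
        simp
    · rintro ⟨X, k⟩
      ext s
      · rfl
      · show (f₁ (FreeGroup.of s))⁻¹ •
            (genHom f₁ k (FreeGroup.of s)).left = k s
        simp [genHom]
  refine ⟨⟨e⟩, ?_⟩
  classical
  rw [Nat.card_congr e]
  simp [Nat.card_eq_fintype_card, Fintype.card_fun]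
end

section
/- Let (G, E, ∂, ▷) be a finite reduced crossed module. Let V be a finite linearly ordered type, let Ed be a finite set of pairs (a, b) of elements of V with a < b (the edges), and let Tr be a finite set of triples (a, b, c) of elements of V with a < b < c (the triangles) such that for every (a, b, c) ∈ Tr the three pairs (a, b), (b, c), (a, c) all lie in Ed. A 𝒢-colouring of this 2-dimensional ordered simplicial complex is a pair of functions c₁ : Ed → G and c₂ : Tr → E such that ∂(c₂(a, b, c))⁻¹ · c₁(a, b) · c₁(b, c) = c₁(a, c) for every (a, b, c) ∈ Tr. Let Q = G/∂(E) be the quotient of G by the (normal) image of ∂, with projection π : G → Q. Then the number of 𝒢-colourings equals (#∂(E))^{#Ed} · (#ker ∂)^{#Tr} · #{ d : Ed → Q | d(a, b) · d(b, c) = d(a, c) for all (a, b, c) ∈ Tr }. -/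
/-!
A colouring is an edge colouring `c₁ : Ed → G` together with, on each triangle `abc`, a
`δ`-preimage of the holonomy `c₁(ab) c₁(bc) c₁(ac)⁻¹`. Such preimages exist exactly when every
holonomy lies in `δ(E)`, i.e. when `π ∘ c₁` is a flat `Q`-colouring, and they then form a coset
of `ker δ` on each triangle. Likewise the edge colourings over a fixed flat `Q`-colouring form a
coset of `δ(E)` on each edge.
-/

namespace MonoidHom

variable {M N κ : Type*} [Group M] [Group N] (f : M →* N)

noncomputable def fiberEquivKerOfMemRange {n : N} (hn : n ∈ f.range) : f ⁻¹' {n} ≃ f.ker :=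
  (f.mem_range.mp hn).choose_spec ▸ f.fiberEquivKer (f.mem_range.mp hn).choose

noncomputable def piFiberEquivPiKer (d : κ → N) (hd : ∀ t, d t ∈ f.range) :
    {x : κ → M // ∀ t, f (x t) = d t} ≃ (κ → f.ker) :=
  Equiv.subtypePiEquivPi.trans (Equiv.piCongrRight fun t => f.fiberEquivKerOfMemRange (hd t))

noncomputable def liftsEquiv {α : Type*} (s : α → κ → N) :
    {x : α × (κ → M) // ∀ t, f (x.2 t) = s x.1 t} ≃
      {a // ∀ t, s a t ∈ f.range} × (κ → f.ker) :=
  calc _ ≃ Σ a : {a // ∀ t, s a t ∈ f.range}, {x : κ → M // ∀ t, f (x t) = s a t} :=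
        { toFun x := ⟨⟨x.1.1, fun t => ⟨x.1.2 t, x.2 t⟩⟩, x.1.2, x.2⟩
          invFun y := ⟨(y.1.1, y.2.1), y.2.2⟩
          left_inv _ := rfl
          right_inv _ := rfl }
    _ ≃ _ := Equiv.sigmaEquivProdOfEquiv fun a => f.piFiberEquivPiKer _ a.2

noncomputable def liftsEquivOfSurjective (hf : Function.Surjective f) (P : (κ → N) → Prop) :
    {x : κ → M // P (f ∘ x)} ≃ {d // P d} × (κ → f.ker) :=
  calc _ ≃ Σ d : {d // P d}, {x : κ → M // f ∘ x = d} :=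
        (Equiv.sigmaSubtypeFiberEquivSubtype (f ∘ ·) fun _ => Iff.rfl).symm
    _ ≃ _ := Equiv.sigmaEquivProdOfEquiv fun d =>
        (Equiv.subtypeEquivRight fun _ => funext_iff).trans
          (f.piFiberEquivPiKer _ fun t => f.mem_range.mpr (hf (d.1 t)))

end MonoidHom

section Colourings

variable {G E ι κ : Type*} [Group G] [Group E] (δ : E →* G) [δ.range.Normal]
  (e₀₁ e₁₂ e₀₂ : κ → ι)

noncomputable def colouringEquiv :
    {c : (ι → G) × (κ → E) // ∀ t, (δ (c.2 t))⁻¹ * c.1 (e₀₁ t) * c.1 (e₁₂ t) = c.1 (e₀₂ t)} ≃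
      ({d : ι → G ⧸ δ.range // ∀ t, d (e₀₁ t) * d (e₁₂ t) = d (e₀₂ t)} × (ι → δ.range)) ×
        (κ → δ.ker) :=
  calc _ ≃ {c : (ι → G) × (κ → E) //
          ∀ t, δ (c.2 t) = c.1 (e₀₁ t) * c.1 (e₁₂ t) / c.1 (e₀₂ t)} :=
        Equiv.subtypeEquivRight fun _ => forall_congr' fun _ => by
          rw [mul_assoc, inv_mul_eq_iff_eq_mul, eq_div_iff_mul_eq', eq_comm]
    _ ≃ {c₁ : ι → G // ∀ t, c₁ (e₀₁ t) * c₁ (e₁₂ t) / c₁ (e₀₂ t) ∈ δ.range} × (κ → δ.ker) :=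
        δ.liftsEquiv fun (c₁ : ι → G) t => c₁ (e₀₁ t) * c₁ (e₁₂ t) / c₁ (e₀₂ t)
    _ ≃ {c₁ : ι → G // ∀ t, (c₁ (e₀₁ t) : G ⧸ δ.range) * c₁ (e₁₂ t) = c₁ (e₀₂ t)} ×
          (κ → δ.ker) :=
        Equiv.prodCongrLeft fun _ => Equiv.subtypeEquivRight fun _ =>
          forall_congr' fun _ => by
            rw [← QuotientGroup.mk_mul, QuotientGroup.eq_iff_div_mem]
    _ ≃ _ := Equiv.prodCongrLeft fun _ =>
        ((QuotientGroup.mk' δ.range).liftsEquivOfSurjective (QuotientGroup.mk'_surjective _)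
          (fun d => ∀ t, d (e₀₁ t) * d (e₁₂ t) = d (e₀₂ t))).trans
        (Equiv.prodCongrRight fun _ => Equiv.piCongrRight fun _ =>
          (MulEquiv.subgroupCongr (QuotientGroup.ker_mk' _)).toEquiv)

end Colourings

theorem crossedModule_count_colourings_general {G E V : Type*} [Group G] [Group E]
    (δ : E →* G)
    [hN : δ.range.Normal]
    (Ed : Finset (V × V))
    (Tr : Finset (V × V × V))
    (hTr : ∀ t ∈ Tr,
      (t.1, t.2.1) ∈ Ed ∧ (t.2.1, t.2.2) ∈ Ed ∧ (t.1, t.2.2) ∈ Ed) :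
    Nat.card {c : ({p // p ∈ Ed} → G) × ({t // t ∈ Tr} → E) //
        ∀ (t : V × V × V) (ht : t ∈ Tr),
          (δ (c.2 ⟨t, ht⟩))⁻¹ * c.1 ⟨(t.1, t.2.1), (hTr t ht).1⟩ *
              c.1 ⟨(t.2.1, t.2.2), (hTr t ht).2.1⟩ =
            c.1 ⟨(t.1, t.2.2), (hTr t ht).2.2⟩} =
      Nat.card δ.range ^ Ed.card * Nat.card δ.ker ^ Tr.card *
        Nat.card {d : {p // p ∈ Ed} → G ⧸ δ.range //
          ∀ (t : V × V × V) (ht : t ∈ Tr),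
            d ⟨(t.1, t.2.1), (hTr t ht).1⟩ * d ⟨(t.2.1, t.2.2), (hTr t ht).2.1⟩ =
              d ⟨(t.1, t.2.2), (hTr t ht).2.2⟩} := by
  let e₀₁ (t : {t // t ∈ Tr}) : {p // p ∈ Ed} := ⟨(t.1.1, t.1.2.1), (hTr t.1 t.2).1⟩
  let e₁₂ (t : {t // t ∈ Tr}) : {p // p ∈ Ed} := ⟨(t.1.2.1, t.1.2.2), (hTr t.1 t.2).2.1⟩
  let e₀₂ (t : {t // t ∈ Tr}) : {p // p ∈ Ed} := ⟨(t.1.1, t.1.2.2), (hTr t.1 t.2).2.2⟩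
  have flatEquiv := Equiv.subtypeEquivRight fun d : {p // p ∈ Ed} → G ⧸ δ.range =>
    (Subtype.forall (q := fun t => d (e₀₁ t) * d (e₁₂ t) = d (e₀₂ t))).symm
  rw [Nat.card_congr ((Equiv.subtypeEquivRight fun _ => Subtype.forall.symm).trans
      (colouringEquiv δ e₀₁ e₁₂ e₀₂)), Nat.card_prod, Nat.card_prod, Nat.card_congr flatEquiv,
    Nat.card_fun, Nat.card_fun, Nat.card_eq_finsetCard, Nat.card_eq_finsetCard]
  ring

/-- Let `(G, E, δ, ▷)` be a finite reduced crossed module (boundary map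
`δ = ∂`).  Let `V` be a finite linearly ordered type of vertices, `Ed` a
finite set of edges `(a, b)` with `a < b`, and `Tr` a finite set of triangles
`(a, b, c)` with `a < b < c`, whose three edges all lie in `Ed`.  A
`𝒢`-colouring is a pair `c = (c₁ : Ed → G, c₂ : Tr → E)` with
`δ(c₂(a,b,c))⁻¹ · c₁(a,b) · c₁(b,c) = c₁(a,c)` for every triangle.  Then the
number of `𝒢`-colourings equals
`(#δ(E))^{#Ed} · (#ker δ)^{#Tr} · #{d : Ed → G/δ(E) | d(a,b)·d(b,c) = d(a,c)}`.
(The quotient group `G/δ(E)` makes sense since `δ(E)` is normal in `G`,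
recorded by the instance `hN`.) -/
theorem crossedModule_count_colourings {G E V : Type*} [Group G] [Group E]
    [Fintype G] [Fintype E] [MulDistribMulAction G E]
    (δ : E →* G)
    (CM1 : ∀ (X : G) (e : E), δ (X • e) = X * δ e * X⁻¹)
    (CM2 : ∀ e f : E, (δ e) • f = e * f * e⁻¹)
    [hN : δ.range.Normal]
    [LinearOrder V] [Fintype V]
    (Ed : Finset (V × V)) (hEd : ∀ p ∈ Ed, p.1 < p.2)
    (Tr : Finset (V × V × V)) (hTrlt : ∀ t ∈ Tr, t.1 < t.2.1 ∧ t.2.1 < t.2.2)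
    (hTr : ∀ t ∈ Tr,
      (t.1, t.2.1) ∈ Ed ∧ (t.2.1, t.2.2) ∈ Ed ∧ (t.1, t.2.2) ∈ Ed) :
    Nat.card {c : ({p // p ∈ Ed} → G) × ({t // t ∈ Tr} → E) //
        ∀ (t : V × V × V) (ht : t ∈ Tr),
          (δ (c.2 ⟨t, ht⟩))⁻¹ * c.1 ⟨(t.1, t.2.1), (hTr t ht).1⟩ *
              c.1 ⟨(t.2.1, t.2.2), (hTr t ht).2.1⟩ =
            c.1 ⟨(t.1, t.2.2), (hTr t ht).2.2⟩} =
      Nat.card δ.range ^ Ed.card * Nat.card δ.ker ^ Tr.card *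
        Nat.card {d : {p // p ∈ Ed} → G ⧸ δ.range //
          ∀ (t : V × V × V) (ht : t ∈ Tr),
            d ⟨(t.1, t.2.1), (hTr t ht).1⟩ * d ⟨(t.2.1, t.2.2), (hTr t ht).2.1⟩ =
              d ⟨(t.1, t.2.2), (hTr t ht).2.2⟩} :=
  crossedModule_count_colourings_general δ (hN := hN) Ed Tr hTr
end
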